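/- arXiv:1707.01692 — 3 statements merged into one kernel-verified Lean document; each statement's English description precedes it below -/
import Mathlib

section
/- Let L|K be a nontrivial Kummer extension of degree p as described. Then for every h ∈ 𝔄 one has 𝔷^p/(h−1) ∈ A, i.e., v(h − 1) ≤ v(𝔷^p) = p·v(ζ − 1); equivalently, the ideal H generated by the elements 𝔷^p/(h−1) for h ∈ 𝔄 is an integral ideal of A. -/
/-!
Mathlib's multiplicative valuation convention is used: `v x ≤ 1` means `x` is
integral (additive valuation `≥ 0`).  The paper's additive inequality
`v(h − 1) ≤ v(𝔷^p)` becomes `v (𝔷^p) ≤ v (h − 1)` multiplicatively, which says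
exactly that `𝔷^p/(h−1)` lies in `A`.
-/

/-- The set `𝔄` of elements `h ∈ K` such that the solutions of `X^p = h`
generate `L` over `K`. -/
def kummerSet (p : ℕ) (K L : Type*) [Field K] [Field L] [Algebra K L] : Set K :=
  {h : K | ∃ β : L, β ^ p = algebraMap K L h ∧ IntermediateField.adjoin K {β} = ⊤}

/-!
Suppose `v(h − 1) < v(𝔷^p)` (multiplicatively). Since `p = ∏_{0<k<p} (1 − ζ^k)` and every
`1 − ζ^k` differs from `𝔷` by a unit, `v(p) = v(𝔷)^(p−1)`. Hence `((1 + 𝔷X)^p − h)/𝔷^p` is a monic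
polynomial over `A` whose linear coefficient `p/𝔷^(p−1)` is a unit and whose constant term
`(1 − h)/𝔷^p` lies in the maximal ideal. Hensel's lemma gives a root `t`, so `h = (1 + 𝔷t)^p` is
a `p`-th power in `K`; as `K` contains the `p`-th roots of unity, the `p`-th roots of `h` then
generate only `K`, contradicting `[L : K] = p`.
-/

open Polynomial

namespace Valuation

section Ring

variable {R : Type*} [Ring R] {Γ₀ : Type*} [LinearOrderedCommMonoidWithZero Γ₀] (v : Valuation R Γ₀)

theorem map_natCast_le_one (n : ℕ) : v n ≤ 1 := by
  induction n with
  | zero => simp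
  | succ n ih => exact_mod_cast v.map_add_le ih v.map_one.le

theorem map_natCast_le_of_dvd {m n : ℕ} (h : m ∣ n) : v n ≤ v m := by
  obtain ⟨k, rfl⟩ := h
  simpa [map_mul] using mul_le_of_le_one_right' (v.map_natCast_le_one k)

end Ring

theorem map_pow_sub_one_le {R : Type*} [CommRing R] {Γ₀ : Type*}
    [LinearOrderedCommMonoidWithZero Γ₀] (v : Valuation R Γ₀) {x : R} (hx : v x ≤ 1) (n : ℕ) :
    v (x ^ n - 1) ≤ v (x - 1) := by
  rw [← mul_geom_sum, map_mul]
  exact mul_le_of_le_one_right' <| v.map_sum_le fun i _ ↦ by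
    rw [map_pow]; exact pow_le_one' hx i

end Valuation

namespace IsPrimitiveRoot

variable {K : Type*} [Field K] {Γ₀ : Type*} [LinearOrderedCommGroupWithZero Γ₀]
  (v : Valuation K Γ₀) {ζ : K} {n : ℕ}

theorem valuation_eq_one (hζ : IsPrimitiveRoot ζ n) (hn : n ≠ 0) : v ζ = 1 :=
  (pow_eq_one_iff_left hn).mp (by rw [← map_pow, hζ.pow_eq_one, map_one])

theorem valuation_pow_sub_one_eq (hζ : IsPrimitiveRoot ζ n) {j : ℕ} (hj : j.Coprime n) :
    v (ζ ^ j - 1) = v (ζ - 1) := by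
  rcases Nat.eq_zero_or_pos n with rfl | hn
  · simp_all
  have : NeZero n := ⟨hn.ne'⟩
  have hv : v ζ = 1 := hζ.valuation_eq_one v hn.ne'
  refine le_antisymm (v.map_pow_sub_one_le hv.le j) ?_
  obtain ⟨i, -, hi⟩ := (hζ.pow_of_coprime j hj).eq_pow_of_pow_eq_one hζ.pow_eq_one
  calc v (ζ - 1) = v ((ζ ^ j) ^ i - 1) := by rw [hi]
    _ ≤ v (ζ ^ j - 1) := v.map_pow_sub_one_le (by rw [map_pow, hv, one_pow]) i

theorem valuation_natCast_eq_sub_one_pow {p : ℕ} (hζ : IsPrimitiveRoot ζ p) (hp : p.Prime) :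
    v (p : K) = v (ζ - 1) ^ (p - 1) := by
  obtain ⟨n, rfl⟩ : ∃ n, p = n + 1 := ⟨p - 1, (Nat.sub_one_add_one hp.ne_zero).symm⟩
  have hfactor : ∀ k ∈ Finset.range n, v (1 - ζ ^ (k + 1)) = v (ζ - 1) := fun k hk ↦ by
    rw [v.map_sub_swap, hζ.valuation_pow_sub_one_eq v]
    exact (Nat.coprime_of_lt_prime k.succ_ne_zero (by simpa using hk) hp).symm
  rw [Nat.cast_add_one, ← hζ.prod_one_sub_pow_eq_order, map_prod, Finset.prod_congr rfl hfactor,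
    Finset.prod_const, Finset.card_range, Nat.add_sub_cancel]

end IsPrimitiveRoot

namespace Valuation

variable {K : Type*} [Field K] {Γ : Type*} [LinearOrderedCommGroupWithZero Γ]
  (v : Valuation K Γ) [HenselianLocalRing v.valuationSubring]

theorem exists_isRoot_of_henselian {g : K[X]} (hg : g.Monic) (hcoeff : ∀ k, v (g.coeff k) ≤ 1)
    (hcoeff₀ : v (g.coeff 0) < 1) (hcoeff₁ : v (g.coeff 1) = 1) : ∃ t : K, g.IsRoot t := by
  set O := v.valuationSubring
  have hsub : (g.coeffs : Set K) ⊆ O.toSubring := fun c hc ↦ by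
    obtain ⟨k, -, rfl⟩ := mem_coeffs_iff.mp hc
    exact hcoeff k
  set gO : O[X] := g.toSubring _ hsub
  have hgO : ∀ k, (gO.coeff k : K) = g.coeff k := fun k ↦ coeff_toSubring ..
  obtain ⟨y, hy, -⟩ := HenselianLocalRing.is_henselian gO ((monic_toSubring _ _ _).mpr hg) 0
    (by rw [← coeff_zero_eq_eval_zero, v.mem_maximalIdeal_iff, hgO]; exact hcoeff₀)
    (by
      rw [← coeff_zero_eq_eval_zero, coeff_derivative,
        (valuationSubring.integers v).isUnit_iff_valuation_eq_one]
      simpa [hgO] using hcoeff₁)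
  refine ⟨y, ?_⟩
  simpa [gO, map_toSubring] using hy.map (f := O.toSubring.subtype)

theorem exists_pow_eq_of_map_sub_one_lt {p : ℕ} (hp : p.Prime) {z : K} (hz : v z ≤ 1)
    (hvp : v (p : K) = v z ^ (p - 1)) {h : K} (hh : v (h - 1) < v (z ^ p)) :
    ∃ β : K, β ^ p = h := by
  have hz₀ : z ≠ 0 := by
    rintro rfl
    simp [zero_pow hp.ne_zero] at hh
  have hvz : 0 < v z := by simpa [zero_lt_iff] using hz₀
  -- `((1 + z X) ^ p - h) / z ^ p`
  set g : K[X] := (X + C z⁻¹) ^ p - C (h / z ^ p)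
  have hg : ∀ k, g.coeff k = z⁻¹ ^ (p - k) * p.choose k - if k = 0 then h / z ^ p else 0 := by
    intro k
    simp [g, coeff_X_add_C_pow, coeff_C]
  have hchoose : ∀ k, 0 < k → v (p.choose k : K) ≤ v z ^ (p - k) := by
    intro k hk
    rcases lt_trichotomy k p with hkp | rfl | hkp
    · calc v (p.choose k : K) ≤ v (p : K) :=
            v.map_natCast_le_of_dvd (hp.dvd_choose_self hk.ne' hkp)
        _ = v z ^ (p - 1) := hvp
        _ ≤ v z ^ (p - k) := pow_le_pow_right_of_le_one' hz (by omega)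
    · simp
    · simp [Nat.choose_eq_zero_of_lt hkp]
  have hcoeff₀ : v (g.coeff 0) < 1 := by
    rw [hg, if_pos rfl, Nat.choose_zero_right, Nat.cast_one, mul_one, Nat.sub_zero, inv_pow,
      ← one_div, ← sub_div, map_div₀, div_lt_one₀ (by rw [map_pow]; exact pow_pos hvz _),
      v.map_sub_swap]
    exact hh
  have hcoeff : ∀ k, v (g.coeff k) ≤ 1 := by
    intro k
    rcases Nat.eq_zero_or_pos k with rfl | hk
    · exact hcoeff₀.le
    rw [hg, if_neg hk.ne', sub_zero, map_mul, map_pow, map_inv₀, inv_pow,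
      inv_mul_le_one₀ (pow_pos hvz _)]
    exact hchoose k hk
  have hcoeff₁ : v (g.coeff 1) = 1 := by
    rw [hg, if_neg one_ne_zero, sub_zero, Nat.choose_one_right, map_mul, map_pow, map_inv₀, hvp,
      inv_pow, inv_mul_cancel₀ (pow_pos hvz _).ne']
  have hmonic : g.Monic :=
    ((monic_X_add_C _).pow p).sub_of_left (degree_C_le.trans_lt (by simp [hp.pos]))
  obtain ⟨t, ht⟩ := v.exists_isRoot_of_henselian hmonic hcoeff hcoeff₀ hcoeff₁
  refine ⟨z * t + 1, ?_⟩
  have ht' : (t + z⁻¹) ^ p = h / z ^ p := by simpa [g, sub_eq_zero] using ht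
  rw [← mul_inv_cancel₀ hz₀, ← mul_add, mul_pow, ht', mul_div_cancel₀ _ (pow_ne_zero _ hz₀)]

end Valuation
namespace IsPrimitiveRoot

variable {K L : Type*} [Field K] [Field L] [Algebra K L] {ζ : K} {p : ℕ}

theorem mem_bot_of_pow_eq_algebraMap_pow (hζ : IsPrimitiveRoot ζ p) [NeZero p] {γ : L} {β : K}
    (hγ : γ ^ p = algebraMap K L (β ^ p)) : γ ∈ (⊥ : IntermediateField K L) := by
  rw [IntermediateField.mem_bot]
  by_cases hβ : β = 0
  · subst hβ
    refine ⟨0, ?_⟩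
    simp_all [zero_pow (NeZero.ne p)]
  have hβL : algebraMap K L β ≠ 0 := by simpa using hβ
  have hunit : (γ / algebraMap K L β) ^ p = 1 := by
    rw [div_pow, hγ, map_pow, div_self (pow_ne_zero _ hβL)]
  obtain ⟨i, -, hi⟩ := (hζ.map_of_injective (algebraMap K L).injective).eq_pow_of_pow_eq_one hunit
  exact ⟨ζ ^ i * β, by rw [map_mul, map_pow, hi, div_mul_cancel₀ _ hβL]⟩

theorem finrank_eq_one_of_pow_mem_kummerSet (hζ : IsPrimitiveRoot ζ p) [NeZero p] {β : K}
    (hβ : β ^ p ∈ kummerSet p K L) : Module.finrank K L = 1 := by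
  obtain ⟨γ, hγ, hadjoin⟩ := hβ
  rw [← IntermediateField.bot_eq_top_iff_finrank_eq_one, ← hadjoin]
  exact le_antisymm bot_le
    (IntermediateField.adjoin_simple_le_iff.mpr (hζ.mem_bot_of_pow_eq_algebraMap_pow hγ))

end IsPrimitiveRoot

theorem statement5_general
    (p : ℕ) (hp : p.Prime)
    (K : Type*) [Field K]
    (Γ : Type*) [LinearOrderedCommGroupWithZero Γ]
    (v : Valuation K Γ) [HenselianLocalRing v.valuationSubring]
    (ζ : K) (hζ : IsPrimitiveRoot ζ p)
    (L : Type*) [Field L] [Algebra K L]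
    (hdeg : Module.finrank K L = p) :
    ∀ h ∈ kummerSet p K L, v ((ζ - 1) ^ p) ≤ v (h - 1) := by
  intro h hh
  by_contra hlt
  have : NeZero p := ⟨hp.ne_zero⟩
  have hvz : v (ζ - 1) ≤ 1 := v.map_sub_le (hζ.valuation_eq_one v hp.ne_zero).le v.map_one.le
  obtain ⟨β, rfl⟩ := v.exists_pow_eq_of_map_sub_one_lt hp hvz
    (hζ.valuation_natCast_eq_sub_one_pow v hp) (not_le.mp hlt)
  exact hp.one_lt.ne' (hdeg ▸ hζ.finrank_eq_one_of_pow_mem_kummerSet hh)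

/-- Lemma 3.4 of the paper: for every `h ∈ 𝔄` the element
`𝔷^p/(h−1)` lies in `A`, i.e. `H` is an integral ideal of `A`. -/
theorem statement5
    (p : ℕ) (hp : p.Prime)
    (K : Type*) [Field K] [CharZero K]
    (Γ : Type*) [LinearOrderedCommGroupWithZero Γ]
    (v : Valuation K Γ) [HenselianLocalRing v.valuationSubring]
    (hres : CharP (IsLocalRing.ResidueField v.valuationSubring) p)
    (ζ : K) (hζ : IsPrimitiveRoot ζ p)
    (L : Type*) [Field L] [Algebra K L] [FiniteDimensional K L]
    (hdeg : Module.finrank K L = p)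
    (α : L) (h₀ : K) (hh₀ : h₀ ≠ 0) (hα : α ^ p = algebraMap K L h₀)
    (hgen : IntermediateField.adjoin K {α} = ⊤)
    (w : Valuation L Γ) (hw : ∀ x : K, w (algebraMap K L x) = v x) :
    ∀ h ∈ kummerSet p K L, v ((ζ - 1) ^ p) ≤ v (h - 1) :=
  statement5_general p hp K Γ v ζ hζ L hdeg
end

section
/- Let L|K be a nontrivial Kummer extension of degree p with defect as described, and let α₁, α₂ ∈ 𝒮 with w(α₁ − 1) ≤ w(α₂ − 1). Then A[α₁′] ⊆ A[α₂′]. -/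
/-- The extension of valued fields has (nontrivial) defect: since
`e·f·d = [L:K] = p`, this is equivalent to `e = f = 1`, i.e. the value group
and the residue field do not grow. -/
def HasDefect {K L : Type*} [Field K] [Field L] [Algebra K L]
    {Γ : Type*} [LinearOrderedCommGroupWithZero Γ]
    (v : Valuation K Γ) (w : Valuation L Γ) : Prop :=
  (∀ y : L, y ≠ 0 → ∃ x : K, x ≠ 0 ∧ w y = v x) ∧
    (∀ y : L, w y ≤ 1 → ∃ x : K, v x ≤ 1 ∧ w (y - algebraMap K L x) < 1)

/-- The set `𝒮 = {α ∈ L | α^p = h ∈ 𝔄, h ∈ A×, h − 1 ∈ m_A}`. -/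
def kummerGens (p : ℕ) {K : Type*} (L : Type*) [Field K] [Field L] [Algebra K L]
    {Γ : Type*} [LinearOrderedCommGroupWithZero Γ] (v : Valuation K Γ) : Set L :=
  {β : L | ∃ h ∈ kummerSet p K L, v h = 1 ∧ v (h - 1) < 1 ∧ algebraMap K L h = β ^ p}

/-- `α' = γ·(α−1)/𝔷`. -/
def primed {K : Type*} {L : Type*} [Field K] [Field L] [Algebra K L]
    (ζ : K) (γ : K) (β : L) : L :=
  algebraMap K L γ * (β - 1) / algebraMap K L (ζ - 1)

/-- The subring `A[x]` of `L` generated by (the image of) `A` and `x`. -/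
def adjoinRing {K : Type*} (L : Type*) [Field K] [Field L] [Algebra K L]
    {Γ : Type*} [LinearOrderedCommGroupWithZero Γ] (v : Valuation K Γ) (x : L) : Subring L :=
  Subring.closure ((algebraMap K L '' (v.valuationSubring : Set K)) ∪ {x})

/-!
Since `ζ ∈ K`, Kummer theory for `L = K(β₂)` gives `β₁ = g β₂^q` with `g ∈ K`, and `v g = 1`
because `β₁, β₂` are units. From `β₂^q - 1 = (β₂ - 1) ∑_{j<q} β₂^j`,
`β₁' = γ₁(g - 1)/𝔷 + g (γ₁/γ₂) (∑_{j<q} β₂^j) β₂'`, and `β₂ = 1 + (𝔷/γ₂) β₂' ∈ A[β₂']`.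
As `v(γᵢ) w(βᵢ - 1) = v(𝔷)`, the hypothesis `w(β₂ - 1) ≤ w(β₁ - 1)` means `v(γ₁/γ₂) ≤ 1`, so the
second summand lies in `A[β₂']`. It and `β₁'` are integral, hence so is the constant
`γ₁(g - 1)/𝔷 ∈ K`, which therefore lies in `A`.
-/

open IntermediateField

theorem IsPrimitiveRoot.exists_eq_pow_mul_of_pow_eq {L : Type*} [Field L] {ζ : L} {n : ℕ}
    [NeZero n] (hζ : IsPrimitiveRoot ζ n) {x y : L} (hxy : x ^ n = y ^ n) :
    ∃ i < n, x = ζ ^ i * y := by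
  rcases eq_or_ne y 0 with rfl | hy
  · exact ⟨0, Nat.pos_of_neZero n, by simpa [NeZero.ne n] using hxy⟩
  · obtain ⟨i, hi, hζi⟩ := hζ.eq_pow_of_pow_eq_one (ξ := x / y)
      (by rw [div_pow, hxy, div_self (pow_ne_zero n hy)])
    exact ⟨i, hi, by rw [hζi, div_mul_cancel₀ x hy]⟩

theorem PowerBasis.exists_eq_smul_gen_pow_of_apply_eq_pow_smul {K L : Type*} [Field K]
    [CommRing L] [Algebra K L] (pb : PowerBasis K L) {c : K} (hc : IsPrimitiveRoot c pb.dim)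
    (σ : L →ₐ[K] L) (hσ : σ pb.gen = c • pb.gen) {y : L} {q : ℕ} (hq : q < pb.dim)
    (hy : σ y = c ^ q • y) : ∃ g : K, y = g • pb.gen ^ q := by
  set a := pb.basis.repr y
  have hσy : σ y = ∑ i : Fin pb.dim, (c ^ (i : ℕ) * a i) • pb.basis i := by
    conv_lhs => rw [← pb.basis.sum_repr y]
    simp only [map_sum, map_smul, pb.coe_basis, map_pow, hσ, _root_.smul_pow, smul_smul, mul_comm]
    rfl
  have hcoef (i : Fin pb.dim) : c ^ (i : ℕ) * a i = c ^ q * a i := by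
    have := congrArg (pb.basis.repr · i) (hσy.symm.trans hy)
    simpa only [pb.basis.repr_sum_self, map_smul, Finsupp.smul_apply, smul_eq_mul] using this
  have hvanish (i : Fin pb.dim) (hi : i ≠ ⟨q, hq⟩) : a i = 0 :=
    (mul_eq_mul_right_iff.1 (hcoef i)).resolve_left fun h =>
      hi (Fin.ext (hc.pow_inj i.2 hq h))
  refine ⟨a ⟨q, hq⟩, ?_⟩
  conv_lhs => rw [← pb.basis.sum_repr y]
  rw [Finset.sum_eq_single ⟨q, hq⟩ (fun i _ hi => by rw [hvanish i hi, zero_smul])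
    (by simp), pb.coe_basis]

open Polynomial in
theorem minpoly_eq_X_pow_sub_C_of_adjoin_eq_top {K L : Type*} [Field K] [Field L] [Algebra K L]
    [FiniteDimensional K L] {n : ℕ} (hdeg : Module.finrank K L = n) {α : L} {a : K}
    (hα : α ^ n = algebraMap K L a) (hgen : K⟮α⟯ = ⊤) : minpoly K α = X ^ n - C a := by
  have hint := IsIntegral.of_finite K α
  have hn : n ≠ 0 := hdeg ▸ Module.finrank_pos.ne'
  refine (eq_of_monic_of_dvd_of_natDegree_le (minpoly.monic hint) (monic_X_pow_sub_C a hn)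
    (minpoly.dvd K α (by simp [hα])) ?_).symm
  rw [natDegree_X_pow_sub_C, ← adjoin.finrank hint, hgen, finrank_top', hdeg]

theorem exists_eq_algebraMap_mul_pow_of_pow_eq_algebraMap {K L : Type*} [Field K] [Field L]
    [Algebra K L] [FiniteDimensional K L] {n : ℕ} {ζ : K} (hζ : IsPrimitiveRoot ζ n)
    (hdeg : Module.finrank K L = n) {α : L} {a : K} (hα : α ^ n = algebraMap K L a)
    (hgen : K⟮α⟯ = ⊤) {β : L} {b : K} (hβ : β ^ n = algebraMap K L b) :
    ∃ (g : K) (q : ℕ), β = algebraMap K L g * α ^ q := by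
  have : NeZero n := ⟨hdeg ▸ Module.finrank_pos.ne'⟩
  let pb := (adjoin.powerBasis (IsIntegral.of_finite K α)).map ((equivOfEq hgen).trans topEquiv)
  have hpb : pb.gen = α := by simp [pb]
  have hdim : pb.dim = n := by rw [← pb.finrank, hdeg]
  let σ := pb.lift (ζ • α) (by
    rw [hpb, minpoly_eq_X_pow_sub_C_of_adjoin_eq_top hdeg hα hgen]
    simp [_root_.smul_pow, hζ.pow_eq_one, hα])
  obtain ⟨q, hq, hσβ⟩ := (hζ.map_of_injective (algebraMap K L).injective).exists_eq_pow_mul_of_pow_eq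
    (x := σ β) (y := β) (by rw [← map_pow, hβ, AlgHom.commutes])
  rw [← hdim] at hζ hq
  obtain ⟨g, hg⟩ := pb.exists_eq_smul_gen_pow_of_apply_eq_pow_smul hζ σ
    (by rw [pb.lift_gen, hpb]) hq (by rw [hσβ, Algebra.smul_def, map_pow])
  exact ⟨g, q, by rw [hg, hpb, Algebra.smul_def]⟩

section KummerGenerators

variable {p : ℕ} {K L : Type*} [Field K] [Field L] [Algebra K L]
  {Γ : Type*} [LinearOrderedCommGroupWithZero Γ] {v : Valuation K Γ} {w : Valuation L Γ}

theorem adjoin_eq_top_of_mem_kummerSet [NeZero p] {ζ : K} (hζ : IsPrimitiveRoot ζ p) {h : K}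
    (hh : h ∈ kummerSet p K L) {β : L} (hβ : β ^ p = algebraMap K L h) : K⟮β⟯ = ⊤ := by
  obtain ⟨β', hβ', hgen⟩ := hh
  obtain ⟨i, -, hi⟩ := (hζ.map_of_injective (algebraMap K L).injective).exists_eq_pow_mul_of_pow_eq
    (hβ'.trans hβ.symm)
  rw [eq_top_iff, ← hgen, adjoin_simple_le_iff, hi, ← map_pow]
  exact mul_mem (IntermediateField.algebraMap_mem _ _) (mem_adjoin_simple_self K β)

theorem valuation_eq_one_of_mem_kummerGens (hp : p ≠ 0)
    (hw : ∀ x : K, w (algebraMap K L x) = v x) {β : L} (hβ : β ∈ kummerGens p L v) : w β = 1 := by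
  obtain ⟨h, -, hvh, -, hβh⟩ := hβ
  exact (pow_eq_one_iff_left hp).1 (by rw [← map_pow, ← hβh, hw, hvh])

theorem exists_eq_algebraMap_mul_pow_of_mem_kummerGens [FiniteDimensional K L] {ζ : K}
    (hζ : IsPrimitiveRoot ζ p) (hdeg : Module.finrank K L = p) {β₁ β₂ : L}
    (hβ₁ : β₁ ∈ kummerGens p L v) (hβ₂ : β₂ ∈ kummerGens p L v) :
    ∃ (g : K) (q : ℕ), β₁ = algebraMap K L g * β₂ ^ q := by
  have : NeZero p := ⟨hdeg ▸ Module.finrank_pos.ne'⟩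
  obtain ⟨h₁, -, -, -, hβh₁⟩ := hβ₁
  obtain ⟨h₂, hh₂, -, -, hβh₂⟩ := hβ₂
  exact exists_eq_algebraMap_mul_pow_of_pow_eq_algebraMap hζ hdeg hβh₂.symm
    (adjoin_eq_top_of_mem_kummerSet hζ hh₂ hβh₂.symm) hβh₁.symm

end KummerGenerators

section Primed

variable {K L : Type*} [Field K] [Field L] [Algebra K L]
  {Γ : Type*} [LinearOrderedCommGroupWithZero Γ] {v : Valuation K Γ} {w : Valuation L Γ}

theorem ne_zero_of_primed_ne_zero {ζ γ : K} {β : L} (h : primed ζ γ β ≠ 0) :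
    γ ≠ 0 ∧ β ≠ 1 ∧ ζ ≠ 1 := by
  simpa [primed, sub_eq_zero, not_or, and_assoc] using h

theorem sub_one_eq_mul_primed {ζ γ : K} {β : L} (hγ : γ ≠ 0) (hζ : ζ ≠ 1) :
    β - 1 = algebraMap K L ((ζ - 1) / γ) * primed ζ γ β := by
  have : algebraMap K L (ζ - 1) ≠ 0 := (map_ne_zero _).2 (sub_ne_zero.2 hζ)
  have : algebraMap K L γ ≠ 0 := (map_ne_zero _).2 hγ
  rw [primed, map_div₀]
  field_simp

theorem primed_algebraMap_mul_pow {ζ γ₁ γ₂ g : K} {β : L} {q : ℕ} (hγ₂ : γ₂ ≠ 0)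
    (hζ : ζ ≠ 1) :
    primed ζ γ₁ (algebraMap K L g * β ^ q) = algebraMap K L (γ₁ * (g - 1) / (ζ - 1)) +
      algebraMap K L (g * (γ₁ / γ₂)) * (∑ j ∈ Finset.range q, β ^ j) * primed ζ γ₂ β := by
  have : algebraMap K L (ζ - 1) ≠ 0 := (map_ne_zero _).2 (sub_ne_zero.2 hζ)
  have : algebraMap K L γ₂ ≠ 0 := (map_ne_zero _).2 hγ₂
  have hgeom := geom_sum_mul β q
  simp only [primed, map_div₀, map_mul, map_sub, map_one] at *
  field_simp
  linear_combination (algebraMap K L γ₁ * algebraMap K L g) * hgeom.symm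

theorem valuation_mul_eq_of_valuation_primed (hw : ∀ x : K, w (algebraMap K L x) = v x)
    {ζ γ : K} {β : L} (h : w (primed ζ γ β) = 1) : v γ * w (β - 1) = v (ζ - 1) := by
  rw [primed, map_div₀, map_mul, hw, hw] at h
  refine (div_eq_one_iff_eq fun h0 => ?_).1 h
  rw [h0, div_zero] at h
  exact zero_ne_one h

theorem valuation_div_le_one_of_valuation_primed (hw : ∀ x : K, w (algebraMap K L x) = v x)
    {ζ γ₁ γ₂ : K} {β₁ β₂ : L} (h₁ : w (primed ζ γ₁ β₁) = 1) (h₂ : w (primed ζ γ₂ β₂) = 1)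
    (hle : w (β₂ - 1) ≤ w (β₁ - 1)) : v (γ₁ / γ₂) ≤ 1 := by
  obtain ⟨-, hβ₁, -⟩ := ne_zero_of_primed_ne_zero (w.ne_zero_iff.1 (h₁ ▸ one_ne_zero))
  obtain ⟨hγ₂, -, -⟩ := ne_zero_of_primed_ne_zero (w.ne_zero_iff.1 (h₂ ▸ one_ne_zero))
  rw [map_div₀, div_le_one₀ (zero_lt_iff.2 (v.ne_zero_iff.2 hγ₂))]
  refine le_of_mul_le_mul_right ?_ (zero_lt_iff.2 (w.ne_zero_iff.2 (sub_ne_zero.2 hβ₁)))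
  calc v γ₁ * w (β₁ - 1) = v γ₂ * w (β₂ - 1) :=
        (valuation_mul_eq_of_valuation_primed hw h₁).trans
          (valuation_mul_eq_of_valuation_primed hw h₂).symm
    _ ≤ v γ₂ * w (β₁ - 1) := by gcongr

end Primed

section AdjoinRing

variable {K L : Type*} [Field K] [Field L] [Algebra K L]
  {Γ : Type*} [LinearOrderedCommGroupWithZero Γ] {v : Valuation K Γ} {w : Valuation L Γ}

theorem algebraMap_mem_adjoinRing {a : K} (ha : v a ≤ 1) (y : L) :
    algebraMap K L a ∈ adjoinRing L v y :=
  Subring.subset_closure (Or.inl ⟨a, ha, rfl⟩)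

theorem self_mem_adjoinRing (y : L) : y ∈ adjoinRing L v y :=
  Subring.subset_closure (Or.inr rfl)

theorem adjoinRing_le_of_mem {x y : L} (h : x ∈ adjoinRing L v y) :
    adjoinRing L v x ≤ adjoinRing L v y := by
  refine Subring.closure_le.2 (Set.union_subset ?_ (Set.singleton_subset_iff.2 h))
  rintro _ ⟨a, ha, rfl⟩
  exact algebraMap_mem_adjoinRing ha y

theorem adjoinRing_le_integer (hw : ∀ x : K, w (algebraMap K L x) = v x) {y : L}
    (hy : w y ≤ 1) : adjoinRing L v y ≤ w.integer := by
  refine Subring.closure_le.2 (Set.union_subset ?_ (Set.singleton_subset_iff.2 hy))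
  rintro _ ⟨a, ha, rfl⟩
  exact (hw a).trans_le ha

theorem mem_adjoinRing_of_eq_algebraMap_add (hw : ∀ x : K, w (algebraMap K L x) = v x)
    {x y z : L} {c : K} (hx : w x ≤ 1) (hy : w y ≤ 1) (hz : z ∈ adjoinRing L v y)
    (hxc : x = algebraMap K L c + z) : x ∈ adjoinRing L v y := by
  have hc : v c ≤ 1 := by
    rw [← hw, eq_sub_of_add_eq hxc.symm]
    exact (w.map_sub _ _).trans (max_le hx (adjoinRing_le_integer hw hy hz))
  rw [hxc]
  exact add_mem (algebraMap_mem_adjoinRing hc y) hz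

theorem mem_adjoinRing_primed (hw : ∀ x : K, w (algebraMap K L x) = v x) {ζ γ : K} {β : L}
    (hβ : w β ≤ 1) (h : w (primed ζ γ β) = 1) : β ∈ adjoinRing L v (primed ζ γ β) := by
  obtain ⟨hγ, -, hζ⟩ := ne_zero_of_primed_ne_zero (w.ne_zero_iff.1 (h ▸ one_ne_zero))
  have hsub := sub_one_eq_mul_primed (β := β) hγ hζ
  set y := primed ζ γ β
  have hc : v ((ζ - 1) / γ) ≤ 1 := by
    have hwsub : w (β - 1) = v ((ζ - 1) / γ) := by rw [hsub, map_mul, h, mul_one, hw]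
    rw [← hwsub]
    exact (w.map_sub _ _).trans (max_le hβ w.map_one.le)
  rw [eq_add_of_sub_eq' hsub]
  exact add_mem (one_mem _) (mul_mem (algebraMap_mem_adjoinRing hc _) (self_mem_adjoinRing _))

end AdjoinRing

theorem statement9_general
    (p : ℕ)
    (K : Type*) [Field K]
    (Γ : Type*) [LinearOrderedCommGroupWithZero Γ]
    (v : Valuation K Γ)
    (ζ : K) (hζ : IsPrimitiveRoot ζ p)
    (L : Type*) [Field L] [Algebra K L] [FiniteDimensional K L]
    (hdeg : Module.finrank K L = p)
    (w : Valuation L Γ) (hw : ∀ x : K, w (algebraMap K L x) = v x)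
    (γ : L → K)
    (hγ : ∀ β ∈ kummerGens p L v, v (γ β) ≤ 1 ∧ w (primed ζ (γ β) β) = 1)
    (β₁ : L) (hβ₁ : β₁ ∈ kummerGens p L v)
    (β₂ : L) (hβ₂ : β₂ ∈ kummerGens p L v)
    -- additive v(α₁ − 1) ≤ v(α₂ − 1), multiplicatively reversed:
    (hle : w (β₂ - 1) ≤ w (β₁ - 1)) :
    adjoinRing L v (primed ζ (γ β₁) β₁) ≤ adjoinRing L v (primed ζ (γ β₂) β₂) := by
  have hp : p ≠ 0 := hdeg ▸ Module.finrank_pos.ne'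
  obtain ⟨-, hx₁⟩ := hγ β₁ hβ₁
  obtain ⟨-, hx₂⟩ := hγ β₂ hβ₂
  obtain ⟨hγ₂, -, hζ1⟩ := ne_zero_of_primed_ne_zero (w.ne_zero_iff.1 (hx₂ ▸ one_ne_zero))
  obtain ⟨g, q, hβ₁g⟩ := exists_eq_algebraMap_mul_pow_of_mem_kummerGens hζ hdeg hβ₁ hβ₂
  have hwβ₂ := valuation_eq_one_of_mem_kummerGens hp hw hβ₂
  have hg : v g = 1 := by
    simpa [hβ₁g, hw, hwβ₂] using valuation_eq_one_of_mem_kummerGens hp hw hβ₁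
  have hβ₂mem := mem_adjoinRing_primed hw hwβ₂.le hx₂
  refine adjoinRing_le_of_mem (mem_adjoinRing_of_eq_algebraMap_add hw hx₁.le hx₂.le ?_
    (hβ₁g ▸ primed_algebraMap_mul_pow hγ₂ hζ1))
  have hcoeff : v (g * (γ β₁ / γ β₂)) ≤ 1 := by
    rw [map_mul, hg, one_mul]
    exact valuation_div_le_one_of_valuation_primed hw hx₁ hx₂ hle
  exact mul_mem (mul_mem (algebraMap_mem_adjoinRing hcoeff _)
    (sum_mem fun j _ => pow_mem hβ₂mem j)) (self_mem_adjoinRing _)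

/-- Lemma 5.3 of the paper: if `α₁, α₂ ∈ 𝒮` and
`v(α₁ − 1) ≤ v(α₂ − 1)` (additively), then `A[α₁'] ⊆ A[α₂']`. -/
theorem statement9
    (p : ℕ) (hp : p.Prime)
    (K : Type*) [Field K] [CharZero K]
    (Γ : Type*) [LinearOrderedCommGroupWithZero Γ]
    (v : Valuation K Γ) [HenselianLocalRing v.valuationSubring]
    (hres : CharP (IsLocalRing.ResidueField v.valuationSubring) p)
    (ζ : K) (hζ : IsPrimitiveRoot ζ p)
    (L : Type*) [Field L] [Algebra K L] [FiniteDimensional K L]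
    (hdeg : Module.finrank K L = p)
    (α₀ : L) (h₀ : K) (hh₀ : h₀ ≠ 0) (hα₀ : α₀ ^ p = algebraMap K L h₀)
    (hgen : IntermediateField.adjoin K {α₀} = ⊤)
    (w : Valuation L Γ) (hw : ∀ x : K, w (algebraMap K L x) = v x)
    (hdefect : HasDefect v w)
    (γ : L → K)
    (hγ : ∀ β ∈ kummerGens p L v, v (γ β) ≤ 1 ∧ w (primed ζ (γ β) β) = 1)
    (β₁ : L) (hβ₁ : β₁ ∈ kummerGens p L v)
    (β₂ : L) (hβ₂ : β₂ ∈ kummerGens p L v)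
    -- additive v(α₁ − 1) ≤ v(α₂ − 1), multiplicatively reversed:
    (hle : w (β₂ - 1) ≤ w (β₁ - 1)) :
    adjoinRing L v (primed ζ (γ β₁) β₁) ≤ adjoinRing L v (primed ζ (γ β₂) β₂) :=
  statement9_general p K Γ v ζ hζ L hdeg w hw γ hγ β₁ hβ₁ β₂ hβ₂ hle
end

section
/- Let R be a commutative ring, σ : R → R a ring endomorphism, and n a natural number. Then for all x, y ∈ R, (σ − 1)^n(xy) = Σ_{k=0}^{n} (n choose k) · (σ − 1)^{n−k}(x) · (σ − 1)^k(σ^{n−k}(y)), where (σ − 1) denotes the additive operator r ↦ σ(r) − r and powers denote iterated composition. In particular, for n = 1, (σ − 1)(xy) = (σ − 1)(x)·σ(y) + x·(σ − 1)(y). -/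
private lemma pascal_sum {M : Type*} [AddCommGroup M] (n : ℕ) (g : ℕ → M) :
    ∑ k ∈ Finset.range (n+1), ((n.choose k : ℤ) • g k + (n.choose k : ℤ) • g (k+1))
      = ∑ k ∈ Finset.range (n+2), ((n+1).choose k : ℤ) • g k := by
  rw [Finset.sum_add_distrib]
  have h1 : ∑ k ∈ Finset.range (n+1), (n.choose k : ℤ) • g k
      = (∑ k ∈ Finset.range (n+1), (n.choose (k+1) : ℤ) • g (k+1)) + g 0 := by
    rw [Finset.sum_range_succ' (fun k => (n.choose k : ℤ) • g k) n,
      Finset.sum_range_succ (fun k => (n.choose (k+1) : ℤ) • g (k+1)) n]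
    simp [Nat.choose_succ_self]
  have h2 : ∑ k ∈ Finset.range (n+2), ((n+1).choose k : ℤ) • g k
      = (∑ k ∈ Finset.range (n+1), ((n+1).choose (k+1) : ℤ) • g (k+1)) + g 0 := by
    rw [Finset.sum_range_succ' (fun k => ((n+1).choose k : ℤ) • g k) (n+1)]
    simp
  rw [h1, h2]
  simp only [Nat.choose_succ_succ' n, Nat.cast_add, add_smul]
  rw [Finset.sum_add_distrib]
  abel

/-- Lemma 5.4 of the paper: for a ring endomorphism `σ` of
a commutative ring `R`, writing `D = σ - 1` for the additive operator
`r ↦ σ r - r`, one has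
`D^[n] (x*y) = ∑_{k=0}^{n} (n choose k) * D^[n-k] x * D^[k] (σ^[n-k] y)`;
in particular `D (x*y) = D x * σ y + x * D y`. -/
theorem statement11
    (R : Type*) [CommRing R] (σ : R →+* R) (n : ℕ) (x y : R) :
    ((fun r : R => σ r - r)^[n] (x * y) =
      ∑ k ∈ Finset.range (n + 1), (n.choose k : ℤ) •
        ((fun r : R => σ r - r)^[n - k] x *
          (fun r : R => σ r - r)^[k] ((⇑σ)^[n - k] y))) ∧
    (fun r : R => σ r - r) (x * y) =
      (fun r : R => σ r - r) x * σ y + x * ((fun r : R => σ r - r) y) := by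
  set D : R → R := fun r => σ r - r with hD
  refine ⟨?_, by simp only [hD, map_mul]; ring⟩
  induction n with
  | zero => simp
  | succ n ih =>
    have hcD : Function.Commute ⇑σ D := by
      intro r; simp [hD, map_sub]
    have hiter : ∀ (k : ℕ) (r : R), σ (D^[k] r) = D^[k] (σ r) :=
      fun k r => hcD.iterate_right k r
    set g : ℕ → R := fun k => D^[n+1-k] x * D^[k] ((⇑σ)^[n+1-k] y) with hg
    rw [Function.iterate_succ_apply', ih]
    have hDsum : D (∑ k ∈ Finset.range (n+1), (n.choose k : ℤ) •
        (D^[n - k] x * D^[k] ((⇑σ)^[n - k] y)))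
        = ∑ k ∈ Finset.range (n+1), D ((n.choose k : ℤ) •
        (D^[n - k] x * D^[k] ((⇑σ)^[n - k] y))) := by
      simp only [hD]
      rw [map_sum, ← Finset.sum_sub_distrib]
    rw [hDsum]
    have key : ∀ k ∈ Finset.range (n+1),
        D ((n.choose k : ℤ) • (D^[n-k] x * D^[k] ((⇑σ)^[n-k] y)))
        = (n.choose k : ℤ) • g k + (n.choose k : ℤ) • g (k+1) := by
      intro k hk
      rw [Finset.mem_range] at hk
      have hk' : k ≤ n := Nat.lt_succ_iff.mp hk
      have hzsmul : ∀ (c : ℤ) (r : R), D (c • r) = c • D r := by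
        intro c r; simp [hD, smul_sub]
      have hLeib : ∀ a b : R, D (a * b) = D a * σ b + a * D b := by
        intro a b; simp only [hD, map_mul]; ring
      rw [hzsmul, hLeib, ← smul_add]
      congr 1
      have e1 : n + 1 - k = n - k + 1 := by omega
      have e2 : n + 1 - (k+1) = n - k := by omega
      simp only [hg, e1, e2]
      congr 2
      · rw [Function.iterate_succ_apply']
      · rw [hiter k]
        congr 1
        exact (Function.iterate_succ_apply' (⇑σ) (n-k) y).symm
      · rw [Function.iterate_succ_apply']
    rw [Finset.sum_congr rfl key, pascal_sum n g]
end
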